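/- arXiv:1403.7419 — 2 statements merged into one kernel-verified Lean document; each statement's English description precedes it below -/
import Mathlib

section
/- Let 0 < r < 1 be real and k a positive integer. Then the sum over all strictly increasing k-tuples of positive integers m₁ < m₂ < ⋯ < m_k of r^{m₁ + ⋯ + m_k} equals r^{k(k+1)/2} divided by the product (1 − r)(1 − r²)⋯(1 − r^k). -/
open Finset

lemma geom_pi : ∀ (n : ℕ) (c : Fin n → ℝ), (∀ i, 0 ≤ c i) → (∀ i, c i < 1) →
    Summable (fun g : Fin n → ℕ => ∏ i, c i ^ g i) ∧
    ∑' g : Fin n → ℕ, ∏ i, c i ^ g i = ∏ i, (1 - c i)⁻¹ := by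
  intro n
  induction n with
  | zero =>
    intro c _ _
    refine ⟨Summable.of_finite, ?_⟩
    rw [tsum_eq_single (default : Fin 0 → ℕ) (by intro b hb; exact absurd (Subsingleton.elim b default) hb)]
    simp
  | succ n ih =>
    intro c h0 h1
    obtain ⟨hs, he⟩ := ih (fun i => c i.succ) (fun i => h0 _) (fun i => h1 _)
    have hgeo : Summable (fun m : ℕ => c 0 ^ m) := summable_geometric_of_lt_one (h0 0) (h1 0)
    have hcomp : ∀ p : ℕ × (Fin n → ℕ),
        (∏ i, c i ^ (Fin.consEquiv (fun _ : Fin (n+1) => ℕ) p) i)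
          = c 0 ^ p.1 * ∏ i : Fin n, (c i.succ) ^ p.2 i := by
      intro p
      rw [Fin.prod_univ_succ]
      simp only [Fin.consEquiv_apply, Fin.cons_zero, Fin.cons_succ]
    have hG : Summable (fun p : ℕ × (Fin n → ℕ) => c 0 ^ p.1 * ∏ i : Fin n, (c i.succ) ^ p.2 i) := by
      apply Summable.mul_of_nonneg hgeo hs
      · exact fun m => pow_nonneg (h0 0) m
      · exact fun g => Finset.prod_nonneg fun i _ => pow_nonneg (h0 _) _
    have hsum : Summable (fun g : Fin (n+1) → ℕ => ∏ i, c i ^ g i) := by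
      rw [← (Fin.consEquiv (fun _ : Fin (n+1) => ℕ)).summable_iff]
      exact hG.congr fun p => (hcomp p).symm
    refine ⟨hsum, ?_⟩
    rw [← (Fin.consEquiv (fun _ : Fin (n+1) => ℕ)).tsum_eq]
    rw [tsum_congr hcomp, ← Summable.tsum_mul_tsum hgeo hs hG,
      tsum_geometric_of_lt_one (h0 0) (h1 0), he, Fin.prod_univ_succ]

lemma phi_strictMono {k : ℕ} (g : Fin k → ℕ) :
    StrictMono (fun i : Fin k => ∑ j ∈ Iic i, (g j + 1)) := by
  intro a b hab
  apply Finset.sum_lt_sum_of_subset (Finset.Iic_subset_Iic.mpr hab.le)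
    (Finset.mem_Iic.mpr le_rfl) (by simp [Finset.mem_Iic, hab.not_ge]) (Nat.succ_pos _)
  intro j _ _; exact Nat.zero_le _

lemma phi_pos {k : ℕ} (g : Fin k → ℕ) (i : Fin k) : 0 < ∑ j ∈ Iic i, (g j + 1) :=
  Finset.sum_pos (fun j _ => Nat.succ_pos _) ⟨i, Finset.mem_Iic.mpr le_rfl⟩

lemma phi_inj {k : ℕ} : Function.Injective
    (fun g : Fin k → ℕ => (fun i : Fin k => ∑ j ∈ Iic i, (g j + 1))) := by
  intro g g' h
  have key : ∀ m : ℕ, ∀ hm : m < k, g ⟨m, hm⟩ = g' ⟨m, hm⟩ := by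
    intro m
    induction m using Nat.strong_induction_on with
    | _ m IH =>
      intro hm
      have h1 : ∑ j ∈ Iic (⟨m, hm⟩ : Fin k), (g j + 1)
          = ∑ j ∈ Iic (⟨m, hm⟩ : Fin k), (g' j + 1) := congrFun h ⟨m, hm⟩
      rw [← Finset.Iio_insert, Finset.sum_insert (by simp), Finset.sum_insert (by simp)] at h1
      have h2 : ∑ j ∈ Iio (⟨m, hm⟩ : Fin k), (g j + 1)
          = ∑ j ∈ Iio (⟨m, hm⟩ : Fin k), (g' j + 1) := by
        refine Finset.sum_congr rfl fun j hj => ?_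
        have hjm : (j : ℕ) < m := by simpa [Fin.lt_def] using Finset.mem_Iio.mp hj
        have := IH j.1 hjm j.isLt
        rw [Fin.eta] at this
        omega
      omega
  funext i
  obtain ⟨m, hm⟩ := i
  exact key m hm

lemma phi_surj {k : ℕ} (f : Fin k → ℕ) (hmono : StrictMono f) (hpos : ∀ i, 0 < f i) :
    ∃ g : Fin k → ℕ, (fun i : Fin k => ∑ j ∈ Iic i, (g j + 1)) = f := by
  refine ⟨fun i => f i - (match i with
    | ⟨0, _⟩ => 0
    | ⟨m+1, h⟩ => f ⟨m, Nat.lt_of_succ_lt h⟩) - 1, ?_⟩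
  funext i
  obtain ⟨m, hm⟩ := i
  induction m with
  | zero =>
    have hIic : Iic (⟨0, hm⟩ : Fin k) = {⟨0, hm⟩} := by
      ext x; simp [Finset.mem_Iic, Fin.le_def, Fin.ext_iff, Nat.le_zero]
    rw [hIic, Finset.sum_singleton]
    have := hpos ⟨0, hm⟩
    show f ⟨0, hm⟩ - 0 - 1 + 1 = f ⟨0, hm⟩
    omega
  | succ m IH =>
    have hm' : m < k := Nat.lt_of_succ_lt hm
    have hIio : Iio (⟨m+1, hm⟩ : Fin k) = Iic (⟨m, hm'⟩ : Fin k) := by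
      ext x; simp [Finset.mem_Iic, Finset.mem_Iio, Fin.le_def, Fin.lt_def]
    rw [← Finset.Iio_insert, Finset.sum_insert (by simp), hIio, IH hm']
    have hlt : f ⟨m, hm'⟩ < f ⟨m+1, hm⟩ := hmono (by simp [Fin.lt_def])
    have := hpos ⟨m, hm'⟩
    show f ⟨m+1, hm⟩ - f ⟨m, hm'⟩ - 1 + 1 + f ⟨m, hm'⟩ = f ⟨m+1, hm⟩
    omega

theorem stmt8 (r : ℝ) (hr0 : 0 < r) (hr1 : r < 1) (k : ℕ) (hk : 0 < k) :
    ∑' m : {f : Fin k → ℕ // StrictMono f ∧ ∀ i, 0 < f i},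
        r ^ (∑ i, (m : Fin k → ℕ) i)
      = r ^ (k * (k + 1) / 2) / ∏ i ∈ Finset.range k, (1 - r ^ (i + 1)) := by
  set c : Fin k → ℝ := fun j => r ^ (k - (j : ℕ)) with hc
  have hc0 : ∀ j : Fin k, 0 ≤ c j := fun j => pow_nonneg hr0.le _
  have hc1 : ∀ j : Fin k, c j < 1 := fun j =>
    pow_lt_one₀ hr0.le hr1 (by have := j.isLt; omega)
  -- the equivalence
  have hbij : Function.Bijective
      (fun g : Fin k → ℕ =>
        (⟨fun i => ∑ j ∈ Iic i, (g j + 1), phi_strictMono g, phi_pos g⟩ :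
          {f : Fin k → ℕ // StrictMono f ∧ ∀ i, 0 < f i})) := by
    constructor
    · intro g g' h
      exact phi_inj (congrArg Subtype.val h)
    · rintro ⟨f, hmono, hpos⟩
      obtain ⟨g, hg⟩ := phi_surj f hmono hpos
      exact ⟨g, Subtype.ext hg⟩
  rw [← (Equiv.ofBijective _ hbij).tsum_eq]
  -- exponent computation
  have hexp : ∀ g : Fin k → ℕ,
      (∑ i : Fin k, ∑ j ∈ Iic i, (g j + 1)) = ∑ j : Fin k, (k - (j : ℕ)) * (g j + 1) := by
    intro g
    rw [Finset.sum_comm' (t' := univ) (s' := fun j => Ici j)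
      (fun i j => by simp [Finset.mem_Iic, Finset.mem_Ici])]
    refine Finset.sum_congr rfl fun j _ => ?_
    rw [Finset.sum_const, Fin.card_Ici, smul_eq_mul]
  have hterm : ∀ g : Fin k → ℕ,
      r ^ (∑ i : Fin k, ∑ j ∈ Iic i, (g j + 1))
        = (∏ j : Fin k, (c j) ^ g j) * ∏ j : Fin k, c j := by
    intro g
    rw [hexp g, ← Finset.prod_pow_eq_pow_sum, ← Finset.prod_mul_distrib]
    refine Finset.prod_congr rfl fun j _ => ?_
    rw [hc, pow_mul, pow_succ]
  have htsum : (∑' g : Fin k → ℕ, r ^ (∑ i : Fin k, ∑ j ∈ Iic i, (g j + 1)))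
      = (∏ j : Fin k, (1 - c j)⁻¹) * ∏ j : Fin k, c j := by
    rw [tsum_congr hterm, tsum_mul_right, (geom_pi k c hc0 hc1).2]
  have hstep : (∑' g : Fin k → ℕ,
      r ^ (∑ i : Fin k, ((Equiv.ofBijective _ hbij) g : Fin k → ℕ) i))
      = (∏ j : Fin k, (1 - c j)⁻¹) * ∏ j : Fin k, c j := htsum
  rw [hstep]
  -- Gauss sum
  have hgauss : ∑ j ∈ range k, (k - j) = k * (k + 1) / 2 := by
    have hrefl : ∑ j ∈ range k, (k - j) = ∑ j ∈ range k, (j + 1) := by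
      rw [← Finset.sum_range_reflect]
      exact Finset.sum_congr rfl fun j hj => by
        have := Finset.mem_range.mp hj; omega
    have h3 : ∑ i ∈ range (k + 1), i = ∑ j ∈ range k, (j + 1) := by
      rw [Finset.sum_range_succ' (fun i => i) k]; simp
    have h2 := Finset.sum_range_id_mul_two (k + 1)
    rw [h3, ← hrefl] at h2
    refine (Nat.div_eq_of_eq_mul_left two_pos ?_).symm
    rw [h2, Nat.add_sub_cancel, Nat.mul_comm]
  have hprodc : (∏ j : Fin k, c j) = r ^ (k * (k + 1) / 2) := by
    rw [hc]
    rw [Fin.prod_univ_eq_prod_range (fun j => r ^ (k - j)) k,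
      Finset.prod_pow_eq_pow_sum, hgauss]
  have hden : (∏ j : Fin k, (1 - c j)) = ∏ i ∈ range k, (1 - r ^ (i + 1)) := by
    rw [hc, Fin.prod_univ_eq_prod_range (fun j => 1 - r ^ (k - j)) k,
      ← Finset.prod_range_reflect (fun j => 1 - r ^ (j + 1)) k]
    refine Finset.prod_congr rfl fun j hj => ?_
    have := Finset.mem_range.mp hj
    have h4 : k - 1 - j + 1 = k - j := by omega
    rw [h4]
  rw [Finset.prod_inv_distrib, hden, hprodc, div_eq_mul_inv, mul_comm]
end

section
/- Let l₁, l₂, l₃ > 0 be real. Then there exists a > 0 such that, with S₁ = [[cosh(l₁/2), sinh(l₁/2)], [sinh(l₁/2), cosh(l₁/2)]] and S₂ = [[cosh(l₂/2), a·sinh(l₂/2)], [a⁻¹·sinh(l₂/2), cosh(l₂/2)]], one has tr(S₁ S₂⁻¹) = −2 cosh(l₃/2). -/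
theorem stmt14 (l1 l2 l3 : ℝ) (h1 : 0 < l1) (h2 : 0 < l2) (h3 : 0 < l3) :
    ∃ a : ℝ, 0 < a ∧
      Matrix.trace
        ((!![Real.cosh (l1 / 2), Real.sinh (l1 / 2);
             Real.sinh (l1 / 2), Real.cosh (l1 / 2)] : Matrix (Fin 2) (Fin 2) ℝ) *
          (!![Real.cosh (l2 / 2), a * Real.sinh (l2 / 2);
              a⁻¹ * Real.sinh (l2 / 2), Real.cosh (l2 / 2)] : Matrix (Fin 2) (Fin 2) ℝ)⁻¹)
        = -2 * Real.cosh (l3 / 2) := by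
  set c1 := Real.cosh (l1 / 2) with hc1
  set c2 := Real.cosh (l2 / 2) with hc2
  set c3 := Real.cosh (l3 / 2) with hc3
  set s1 := Real.sinh (l1 / 2) with hs1
  set s2 := Real.sinh (l2 / 2) with hs2
  have hs1p : 0 < s1 := Real.sinh_pos_iff.2 (by linarith)
  have hs2p : 0 < s2 := Real.sinh_pos_iff.2 (by linarith)
  have hc3p : 0 < c3 := Real.cosh_pos _
  have hcs : c1 * c2 ≥ 1 + s1 * s2 := by
    have := Real.cosh_sub (l1 / 2) (l2 / 2)
    have h := Real.one_le_cosh (l1 / 2 - l2 / 2)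
    nlinarith
  set K : ℝ := (2 * c1 * c2 + 2 * c3) / (s1 * s2) with hK
  have hKgt : 2 < K := by
    rw [hK, lt_div_iff₀ (by positivity)]
    nlinarith
  set a : ℝ := (K + Real.sqrt (K ^ 2 - 4)) / 2 with ha
  have hsq : Real.sqrt (K ^ 2 - 4) ^ 2 = K ^ 2 - 4 := by
    rw [Real.sq_sqrt]; nlinarith
  have hap : 0 < a := by
    have := Real.sqrt_nonneg (K ^ 2 - 4)
    rw [ha]; linarith
  have hainv : a⁻¹ = K - a := by
    have hmul : a * (K - a) = 1 := by
      rw [ha]; nlinarith [hsq]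
    field_simp
    nlinarith [hmul]
  refine ⟨a, hap, ?_⟩
  have hdet : (!![c2, a * s2; a⁻¹ * s2, c2] : Matrix (Fin 2) (Fin 2) ℝ).det = 1 := by
    rw [Matrix.det_fin_two_of]
    have : a * s2 * (a⁻¹ * s2) = s2 ^ 2 := by
      field_simp
    rw [this]
    have := Real.cosh_sq_sub_sinh_sq (l2 / 2)
    nlinarith
  rw [Matrix.inv_def, hdet, Matrix.adjugate_fin_two_of]
  simp only [Ring.inverse_one, one_smul]
  rw [show (!![c1, s1; s1, c1] : Matrix (Fin 2) (Fin 2) ℝ) * !![c2, -(a * s2); -(a⁻¹ * s2), c2]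
      = !![c1 * c2 + s1 * (-(a⁻¹ * s2)), c1 * (-(a * s2)) + s1 * c2;
           s1 * c2 + c1 * (-(a⁻¹ * s2)), s1 * (-(a * s2)) + c1 * c2] by
    rw [Matrix.mul_fin_two]]
  rw [Matrix.trace_fin_two_of, hainv]
  have hKeq : K * (s1 * s2) = 2 * c1 * c2 + 2 * c3 := by
    rw [hK]; field_simp
  linear_combination -hKeq
end
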